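/- In the word model, for a word x of length l(x) with 0 < l(x) < M, the relative likelihood L(r(x)|x)/L(x|x) = (1/(k+1) − δ/k)/(1/(k+1) + δ) can be made smaller than any ε > 0 by choosing k large enough, while the probability under θ that the observation x satisfies r(x) = θ equals k/(k+1) − δ, which tends to 1 − δ as k → ∞. -/

import Mathlib

open Filter Topology

theorem mul_one_div_add_one_sub_div_self {K : Type*} [Field K] {x : K} (hx : x ≠ 0) (δ : K) :
    x * (1 / (x + 1) - δ / x) = x / (x + 1) - δ := by
  rw [mul_sub, mul_one_div, mul_div_cancel₀ _ hx]

theorem tendsto_likelihood_ratio_atTop_zero {δ : ℝ} (hδ : δ ≠ 0) :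
    Tendsto (fun k : ℕ => (1 / ((k : ℝ) + 1) - δ / k) / (1 / ((k : ℝ) + 1) + δ)) atTop (𝓝 0) := by
  have hnum : Tendsto (fun k : ℕ => 1 / ((k : ℝ) + 1) - δ / k) atTop (𝓝 0) := by
    simpa using tendsto_one_div_add_atTop_nhds_zero_nat.sub (tendsto_const_div_atTop_nhds_zero_nat δ)
  have hden : Tendsto (fun k : ℕ => 1 / ((k : ℝ) + 1) + δ) atTop (𝓝 δ) := by
    simpa using tendsto_one_div_add_atTop_nhds_zero_nat.add_const δ
  rw [← zero_div δ]
  exact hnum.div hden hδ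

/-- In the word model: (i) the relative likelihood of `r(x)` versus the MLE `x` can be
made arbitrarily small by taking `k` large; (ii) `P_θ(r(X) = θ) = k/(k+1) − δ → 1 − δ`. -/
theorem word_model_likelihood (δ : ℝ) (hδ : 0 < δ) :
    (∀ ε > 0, ∃ K : ℕ, ∀ k : ℕ, K ≤ k →
        (1 / ((k : ℝ) + 1) - δ / k) / (1 / ((k : ℝ) + 1) + δ) < ε) ∧
    (∀ k : ℕ, 1 ≤ k →
        (k : ℝ) * (1 / ((k : ℝ) + 1) - δ / k) = (k : ℝ) / ((k : ℝ) + 1) - δ) ∧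
    Tendsto (fun k : ℕ => (k : ℝ) / ((k : ℝ) + 1) - δ) atTop (nhds (1 - δ)) := by
  refine ⟨fun ε hε => ?_, fun k hk => ?_, ?_⟩
  · exact eventually_atTop.mp <|
      (tendsto_likelihood_ratio_atTop_zero hδ.ne').eventually (gt_mem_nhds hε)
  · exact mul_one_div_add_one_sub_div_self (by exact_mod_cast Nat.one_le_iff_ne_zero.mp hk) δ
  · exact (tendsto_natCast_div_add_atTop (1 : ℝ)).sub_const δ
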